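/- For any δ' in a nonempty open interval of values, if two triples (j,k,ℓ) and (j',k',ℓ') of naturals satisfy that h^{δ' j + ℓ}ε(h)^k and h^{δ' j' + ℓ'}ε(h)^{k'} are comparable as h → 0 for all δ' in that interval, then j = j'. -/

import Mathlib

/-!
Fix two exponents `a < b` in the interval. Since `h ^ (b * j + ℓ) = h ^ (a * j + ℓ) * h ^ ((b - a) * j)`,
dividing the comparability at `b` by the one at `a` (allowed because `ε > 0` near `0`) shows that
`h ^ ((b - a) * j)` and `h ^ ((b - a) * j')` are comparable as `h → 0⁺`. Powers of `h` with different
exponents are not, because their quotient is a power of `h` tending to `0` or to `∞`.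
-/

open Filter Topology Asymptotics

lemma le_of_rpow_isBigO_rpow_nhdsGT_zero {p q : ℝ}
    (h : (fun x : ℝ ↦ x ^ p) =O[𝓝[>] 0] fun x ↦ x ^ q) : q ≤ p := by
  by_contra! hpq
  have hquot : (fun x : ℝ ↦ x ^ (p - q)) =ᶠ[𝓝[>] 0] fun x ↦ ‖x ^ p / x ^ q‖ := by
    filter_upwards [self_mem_nhdsWithin] with x (hx : 0 < x)
    rw [Real.rpow_sub hx, Real.norm_of_nonneg (by positivity)]
  exact not_isBoundedUnder_of_tendsto_atTop
    ((tendsto_rpow_neg_nhdsGT_zero (sub_neg.2 hpq)).congr' hquot) (div_isBoundedUnder_of_isBigO h)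

lemma eq_of_rpow_isTheta_rpow_nhdsGT_zero {p q : ℝ}
    (h : (fun x : ℝ ↦ x ^ p) =Θ[𝓝[>] 0] fun x ↦ x ^ q) : p = q :=
  le_antisymm (le_of_rpow_isBigO_rpow_nhdsGT_zero h.2) (le_of_rpow_isBigO_rpow_nhdsGT_zero h.1)

lemma isTheta_of_two_sided_bound {α : Type*} {l : Filter α} {f g : α → ℝ} {C : ℝ} (hC : 0 < C)
    (hg : ∀ᶠ x in l, 0 ≤ g x) (hfg : ∀ᶠ x in l, 1 / C * g x ≤ f x ∧ f x ≤ C * g x) :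
    f =Θ[l] g := by
  refine ⟨.of_bound C ?_, .of_bound C ?_⟩ <;> filter_upwards [hg, hfg] with x hgx ⟨hlow, hup⟩
  all_goals
    have hfx : 0 ≤ f x := (mul_nonneg (by positivity) hgx).trans hlow
    rw [Real.norm_of_nonneg hfx, Real.norm_of_nonneg hgx]
  · exact hup
  · rwa [one_div, inv_mul_le_iff₀ hC] at hlow

lemma rpow_mul_pow_div_rpow_mul_pow {x y : ℝ} (hx : 0 < x) (hy : y ≠ 0) (a b n m : ℝ) (k : ℕ) :
    x ^ (b * n + m) * y ^ k / (x ^ (a * n + m) * y ^ k) = x ^ ((b - a) * n) := by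
  rw [mul_div_mul_right _ _ (pow_ne_zero k hy), ← Real.rpow_sub hx]
  ring_nf

theorem stmt_12_general (δ N : ℝ)
    (ε : ℝ → ℝ) (hε : ∀ h : ℝ, 0 < h → h < 1 → h ^ N ≤ ε h ∧ ε h ≤ h ^ δ)
    (j j' k k' ℓ ℓ' : ℕ) (δ₁ δ₂ : ℝ) (hδ₁₂ : δ₁ < δ₂)
    (hcomp : ∀ δ' : ℝ, δ₁ < δ' → δ' < δ₂ →
      ∃ C : ℝ, 0 < C ∧ ∃ h₀ : ℝ, 0 < h₀ ∧ h₀ ≤ 1 ∧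
        ∀ h : ℝ, 0 < h → h < h₀ →
          (1 / C) * (h ^ (δ' * (j' : ℝ) + (ℓ' : ℝ)) * ε h ^ k') ≤
              h ^ (δ' * (j : ℝ) + (ℓ : ℝ)) * ε h ^ k ∧
            h ^ (δ' * (j : ℝ) + (ℓ : ℝ)) * ε h ^ k ≤
              C * (h ^ (δ' * (j' : ℝ) + (ℓ' : ℝ)) * ε h ^ k')) :
    j = j' := by
  have hε_pos : ∀ᶠ h in 𝓝[>] (0 : ℝ), 0 < h ∧ 0 < ε h := by
    filter_upwards [Ioo_mem_nhdsGT one_pos] with h ⟨h0, h1⟩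
    exact ⟨h0, (Real.rpow_pos_of_pos h0 N).trans_le (hε h h0 h1).1⟩
  have htheta : ∀ δ', δ₁ < δ' → δ' < δ₂ →
      (fun h : ℝ ↦ h ^ (δ' * (j : ℝ) + ℓ) * ε h ^ k) =Θ[𝓝[>] 0]
        fun h ↦ h ^ (δ' * (j' : ℝ) + ℓ') * ε h ^ k' := by
    intro δ' h₁ h₂
    obtain ⟨C, hC, h₀, hh₀, -, hbound⟩ := hcomp δ' h₁ h₂
    refine isTheta_of_two_sided_bound hC ?_ ?_
    · filter_upwards [hε_pos] with h ⟨h0, hεh⟩ using by positivity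
    · filter_upwards [Ioo_mem_nhdsGT hh₀] with h ⟨h0, hh⟩ using hbound h h0 hh
  obtain ⟨a, ha₁, ha₂⟩ := exists_between hδ₁₂
  obtain ⟨b, hab, hb₂⟩ := exists_between ha₂
  have hquot : ∀ n m p : ℕ,
      (fun h : ℝ ↦ h ^ (b * (n : ℝ) + m) * ε h ^ p / (h ^ (a * (n : ℝ) + m) * ε h ^ p))
        =ᶠ[𝓝[>] 0] fun h ↦ h ^ ((b - a) * n) := fun n m p ↦
    hε_pos.mono fun h ⟨h0, hεh⟩ ↦ rpow_mul_pow_div_rpow_mul_pow h0 hεh.ne' a b n m p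
  have hshift := ((hquot j ℓ k).symm.trans_isTheta
    ((htheta b (ha₁.trans hab) hb₂).div (htheta a ha₁ ha₂))).trans_eventuallyEq (hquot j' ℓ' k')
  exact_mod_cast mul_left_cancel₀ (sub_ne_zero.2 hab.ne')
    (eq_of_rpow_isTheta_rpow_nhdsGT_zero hshift)

/-- If for all `δ'` in a nonempty open interval the functions
`h ↦ h^{δ'j+ℓ} ε(h)^k` and `h ↦ h^{δ'j'+ℓ'} ε(h)^{k'}` are comparable as `h → 0⁺`,
then `j = j'`. Here `ε` satisfies `h^N ≤ ε(h) ≤ h^δ` on `(0,1)`. -/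
theorem stmt_12 (δ N : ℝ) (hδ : 0 < δ) (hδN : δ < N)
    (ε : ℝ → ℝ) (hε : ∀ h : ℝ, 0 < h → h < 1 → h ^ N ≤ ε h ∧ ε h ≤ h ^ δ)
    (j j' k k' ℓ ℓ' : ℕ) (δ₁ δ₂ : ℝ) (hδ₁₂ : δ₁ < δ₂)
    (hcomp : ∀ δ' : ℝ, δ₁ < δ' → δ' < δ₂ →
      ∃ C : ℝ, 0 < C ∧ ∃ h₀ : ℝ, 0 < h₀ ∧ h₀ ≤ 1 ∧
        ∀ h : ℝ, 0 < h → h < h₀ →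
          (1 / C) * (h ^ (δ' * (j' : ℝ) + (ℓ' : ℝ)) * ε h ^ k') ≤
              h ^ (δ' * (j : ℝ) + (ℓ : ℝ)) * ε h ^ k ∧
            h ^ (δ' * (j : ℝ) + (ℓ : ℝ)) * ε h ^ k ≤
              C * (h ^ (δ' * (j' : ℝ) + (ℓ' : ℝ)) * ε h ^ k')) :
    j = j' :=
  stmt_12_general δ N ε hε j j' k k' ℓ ℓ' δ₁ δ₂ hδ₁₂ hcomp
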